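/- The conjugation identity f ∘ τ = σ ∘ f holds, where τ is Schneider's continued fraction map, σ is the shift map, and f is defined via the continued fraction-to-digit correspondence. -/

import Mathlib

open scoped Classical in
noncomputable def eps {p : ℕ} [Fact p.Prime] (x : ℚ_[p]) : ℚ_[p] :=
  if x = 0 then 1 else (p : ℚ_[p]) ^ (-x.valuation) * x

noncomputable def fdigit {p : ℕ} [Fact p.Prime] (x : ℚ_[p]) : ℕ :=
  if h : ‖x‖ ≤ 1 then ((PadicInt.toZMod (⟨x, h⟩ : ℤ_[p])).val) else 0

noncomputable def tau {p : ℕ} [Fact p.Prime] (x : ℚ_[p]) : ℚ_[p] :=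
  1 / eps x - (fdigit (1 / eps x) : ℚ_[p])

noncomputable def sigma {p : ℕ} [Fact p.Prime] (x : ℚ_[p]) : ℚ_[p] :=
  eps x - (fdigit (eps x) : ℚ_[p])

/-- `f(x) = Σ_{n=0}^∞ ⌊1/ε(τⁿ x)⌋_p ∏_{m=0}^n τᵐ x / ε(τᵐ x)` -/
noncomputable def schneiderF {p : ℕ} [Fact p.Prime] (x : ℚ_[p]) : ℚ_[p] :=
  ∑' n : ℕ, (fdigit (1 / eps (tau^[n] x)) : ℚ_[p]) *
    ∏ m ∈ Finset.range (n + 1), (tau^[m] x) / eps (tau^[m] x)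

/-- Finite continued fraction `b 0 / (a 0 + b 1 / (a 1 + ⋯ + b n / (a n + x)))`. -/
noncomputable def cf {p : ℕ} [Fact p.Prime] : (ℕ → ℚ_[p]) → (ℕ → ℚ_[p]) → ℕ → ℚ_[p] → ℚ_[p]
  | a, b, 0, x => b 0 / (a 0 + x)
  | a, b, n + 1, x => b 0 / (a 0 + cf (fun i => a (i + 1)) (fun i => b (i + 1)) n x)

section Aux

variable {p : ℕ} [Fact p.Prime]

lemma hp_one_lt : (1 : ℝ) < p := by exact_mod_cast (Fact.out : p.Prime).one_lt

lemma hp_cast_ne_zero : (p : ℚ_[p]) ≠ 0 := by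
  exact_mod_cast (Fact.out : p.Prime).ne_zero

lemma eps_ne_zero (x : ℚ_[p]) : eps x ≠ 0 := by
  unfold eps
  split
  · exact one_ne_zero
  · exact mul_ne_zero (zpow_ne_zero _ hp_cast_ne_zero) ‹_›

lemma norm_eps (x : ℚ_[p]) : ‖eps x‖ = 1 := by
  unfold eps
  split
  · simp
  · rename_i hx
    rw [norm_mul, Padic.norm_p_zpow, Padic.norm_eq_zpow_neg_valuation hx, ← zpow_add₀
      (by exact_mod_cast (Fact.out : p.Prime).pos.ne' : (p:ℝ) ≠ 0), neg_neg, add_neg_cancel,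
      zpow_zero]

lemma norm_one_div_eps (x : ℚ_[p]) : ‖1 / eps x‖ = 1 := by
  rw [norm_div, norm_one, norm_eps, div_one]

lemma fdigit_lt (x : ℚ_[p]) : fdigit x < p := by
  unfold fdigit
  split
  · exact ZMod.val_lt _
  · exact (Fact.out : p.Prime).pos

lemma norm_sub_fdigit_le {x : ℚ_[p]} (h : ‖x‖ ≤ 1) :
    ‖x - (fdigit x : ℚ_[p])‖ ≤ (p : ℝ)⁻¹ := by
  set z : ℤ_[p] := ⟨x, h⟩ with hz
  have hfd : fdigit x = (PadicInt.toZMod z).val := by rw [fdigit, dif_pos h]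
  set w : ℤ_[p] := z - ((PadicInt.toZMod z).val : ℤ_[p]) with hw
  have hker : PadicInt.toZMod w = 0 := by
    rw [hw, map_sub, map_natCast, ZMod.natCast_val, ZMod.cast_id, sub_self]
  have hmem : w ∈ IsLocalRing.maximalIdeal ℤ_[p] := by
    rw [← PadicInt.ker_toZMod, RingHom.mem_ker]; exact hker
  have hnorm : ‖w‖ ≤ (p : ℝ) ^ (-(1:ℕ) : ℤ) := by
    rw [PadicInt.norm_le_pow_iff_mem_span_pow, pow_one, ← PadicInt.maximalIdeal_eq_span_p]
    exact hmem
  have : ‖w‖ ≤ (p : ℝ)⁻¹ := by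
    simpa [zpow_neg, zpow_one] using hnorm
  rw [hfd]
  calc ‖x - ((PadicInt.toZMod z).val : ℚ_[p])‖ = ‖(w : ℚ_[p])‖ := by
        rw [hw]; push_cast [PadicInt.coe_sub]; rfl
    _ = ‖w‖ := (PadicInt.norm_def).symm
    _ ≤ (p : ℝ)⁻¹ := this

lemma fdigit_ne_zero {x : ℚ_[p]} (h : ‖x‖ = 1) : fdigit x ≠ 0 := by
  intro h0
  have := norm_sub_fdigit_le (le_of_eq h)
  rw [h0] at this
  simp only [Nat.cast_zero, sub_zero, h] at this
  have : (p:ℝ)⁻¹ < 1 := inv_lt_one_of_one_lt₀ hp_one_lt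
  linarith

lemma fdigit_add_of_small (a : ℕ) (ha : a < p) {w : ℚ_[p]} (hw : ‖w‖ ≤ (p : ℝ)⁻¹) :
    fdigit ((a : ℚ_[p]) + w) = a := by
  have hplt : (p:ℝ)⁻¹ < 1 := inv_lt_one_of_one_lt₀ hp_one_lt
  set x : ℚ_[p] := (a : ℚ_[p]) + w with hx
  have hx1 : ‖x‖ ≤ 1 := by
    refine le_trans (Padic.nonarchimedean _ _) (max_le ?_ (hw.trans hplt.le))
    exact_mod_cast Padic.norm_int_le_one (a : ℤ)
  have hd : fdigit x < p := fdigit_lt x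
  have hsub : ‖x - (fdigit x : ℚ_[p])‖ ≤ (p : ℝ)⁻¹ := norm_sub_fdigit_le hx1
  have key : ‖(((a : ℤ) - (fdigit x : ℤ) : ℤ) : ℚ_[p])‖ < 1 := by
    have : (((a : ℤ) - (fdigit x : ℤ) : ℤ) : ℚ_[p]) = (x - (fdigit x : ℚ_[p])) - w := by
      push_cast [hx]; ring
    rw [this]
    calc ‖(x - (fdigit x : ℚ_[p])) - w‖ ≤ max ‖x - (fdigit x : ℚ_[p])‖ ‖w‖ := by
          simpa [sub_eq_add_neg] using Padic.nonarchimedean (x - (fdigit x : ℚ_[p])) (-w)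
      _ ≤ (p:ℝ)⁻¹ := max_le hsub hw
      _ < 1 := hplt
  rw [Padic.norm_intCast_lt_one_iff] at key
  have : ((a : ℤ) - (fdigit x : ℤ)) = 0 := by
    refine Int.eq_zero_of_abs_lt_dvd key ?_
    rw [abs_lt]
    constructor <;> omega
  omega

lemma norm_tau_le (x : ℚ_[p]) : ‖tau x‖ ≤ (p : ℝ)⁻¹ := by
  rw [tau]
  exact norm_sub_fdigit_le (le_of_eq (norm_one_div_eps x))

/-- The `n`-th term of the series defining `schneiderF`. -/
noncomputable def sterm (x : ℚ_[p]) (n : ℕ) : ℚ_[p] :=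
  (fdigit (1 / eps (tau^[n] x)) : ℚ_[p]) *
    ∏ m ∈ Finset.range (n + 1), (tau^[m] x) / eps (tau^[m] x)

lemma schneiderF_eq_tsum (x : ℚ_[p]) : schneiderF x = ∑' n, sterm x n := rfl

lemma norm_div_eps (y : ℚ_[p]) : ‖y / eps y‖ = ‖y‖ := by
  rw [norm_div, norm_eps, div_one]

lemma norm_natCast_le_one (a : ℕ) : ‖(a : ℚ_[p])‖ ≤ 1 := by
  exact_mod_cast Padic.norm_int_le_one (a : ℤ)

lemma norm_sterm_le (x : ℚ_[p]) (n : ℕ) : ‖sterm x n‖ ≤ ‖x‖ * ((p : ℝ)⁻¹) ^ n := by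
  have hpinv : (0:ℝ) ≤ (p:ℝ)⁻¹ := by positivity
  rw [sterm, norm_mul, Finset.prod_range_succ']
  simp only [Function.iterate_zero, id_eq, norm_mul]
  rw [norm_prod]
  calc ‖(fdigit (1 / eps (tau^[n] x)) : ℚ_[p])‖ *
        ((∏ m ∈ Finset.range n, ‖tau^[m+1] x / eps (tau^[m+1] x)‖) * ‖x / eps x‖)
      ≤ 1 * ((∏ m ∈ Finset.range n, ‖tau^[m+1] x / eps (tau^[m+1] x)‖) * ‖x / eps x‖) := by
        apply mul_le_mul_of_nonneg_right (norm_natCast_le_one _)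
        positivity
    _ ≤ ((p:ℝ)⁻¹) ^ n * ‖x‖ := by
        rw [one_mul, norm_div_eps]
        apply mul_le_mul_of_nonneg_right _ (norm_nonneg x)
        calc (∏ m ∈ Finset.range n, ‖tau^[m+1] x / eps (tau^[m+1] x)‖)
            ≤ ∏ m ∈ Finset.range n, (p:ℝ)⁻¹ := by
              apply Finset.prod_le_prod (fun _ _ => norm_nonneg _)
              intro m _
              rw [norm_div_eps, Function.iterate_succ_apply']
              exact norm_tau_le _
          _ = ((p:ℝ)⁻¹) ^ n := by rw [Finset.prod_const, Finset.card_range]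
    _ = ‖x‖ * ((p:ℝ)⁻¹) ^ n := mul_comm _ _

lemma summable_sterm (x : ℚ_[p]) : Summable (sterm x) := by
  apply Summable.of_norm
  apply Summable.of_nonneg_of_le (fun n => norm_nonneg _) (norm_sterm_le x)
  exact (summable_geometric_of_lt_one (by positivity)
    (inv_lt_one_of_one_lt₀ hp_one_lt)).mul_left _

lemma norm_finset_sum_le {s : Finset ℕ} {f : ℕ → ℚ_[p]} {C : ℝ} (hC : 0 ≤ C)
    (h : ∀ n ∈ s, ‖f n‖ ≤ C) : ‖∑ n ∈ s, f n‖ ≤ C := by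
  classical
  induction s using Finset.induction_on with
  | empty => simpa using hC
  | insert a s' hns ih =>
    rw [Finset.sum_insert hns]
    refine le_trans (Padic.nonarchimedean _ _) (max_le ?_ ?_)
    · exact h a (Finset.mem_insert_self a s')
    · exact ih fun n hn => h n (Finset.mem_insert_of_mem hn)

lemma norm_schneiderF_le (x : ℚ_[p]) : ‖schneiderF x‖ ≤ ‖x‖ := by
  rw [schneiderF_eq_tsum]
  have hs := (summable_sterm x).hasSum
  have htend := hs.tendsto_sum_nat
  have hcont : Filter.Tendsto (fun n => ‖∑ i ∈ Finset.range n, sterm x i‖)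
      Filter.atTop (nhds ‖∑' n, sterm x n‖) := htend.norm
  refine le_of_tendsto hcont (Filter.Eventually.of_forall fun n => ?_)
  apply norm_finset_sum_le (norm_nonneg x)
  intro m _
  refine le_trans (norm_sterm_le x m) ?_
  have : ((p:ℝ)⁻¹) ^ m ≤ 1 :=
    pow_le_one₀ (by positivity) (inv_le_one_of_one_le₀ hp_one_lt.le)
  calc ‖x‖ * ((p:ℝ)⁻¹) ^ m ≤ ‖x‖ * 1 :=
        mul_le_mul_of_nonneg_left this (norm_nonneg x)
    _ = ‖x‖ := mul_one _

lemma schneiderF_rec (x : ℚ_[p]) :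
    schneiderF x = (x / eps x) * ((fdigit (1 / eps x) : ℚ_[p]) + schneiderF (tau x)) := by
  rw [schneiderF_eq_tsum, (summable_sterm x).tsum_eq_zero_add]
  have h0 : sterm x 0 = (fdigit (1 / eps x) : ℚ_[p]) * (x / eps x) := by
    simp [sterm]
  have hsucc : ∀ n, sterm x (n + 1) = sterm (tau x) n * (x / eps x) := by
    intro n
    rw [sterm, sterm]
    have hiter : ∀ m : ℕ, tau^[m + 1] x = tau^[m] (tau x) := fun m =>
      Function.iterate_succ_apply tau m x
    rw [Finset.prod_range_succ']
    simp only [Function.iterate_zero, id_eq, hiter]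
    ring
  rw [h0]
  have : ∑' n, sterm x (n + 1) = ∑' n, sterm (tau x) n * (x / eps x) := by
    exact tsum_congr hsucc
  rw [this, tsum_mul_right, ← schneiderF_eq_tsum]
  ring

lemma fdigit_one : fdigit (1 : ℚ_[p]) = 1 := by
  have := fdigit_add_of_small (p := p) 1 (Fact.out : p.Prime).one_lt
    (w := 0) (by rw [norm_zero]; positivity)
  simpa using this

lemma tau_zero : tau (0 : ℚ_[p]) = 0 := by
  have heps : eps (0 : ℚ_[p]) = 1 := if_pos rfl
  rw [tau, heps, div_one, fdigit_one]
  simp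

lemma schneiderF_zero : schneiderF (0 : ℚ_[p]) = 0 := by
  rw [schneiderF_eq_tsum]
  have : ∀ n, sterm (0 : ℚ_[p]) n = 0 := by
    intro n
    rw [sterm]
    have : ∏ m ∈ Finset.range (n + 1), (tau^[m] (0:ℚ_[p])) / eps (tau^[m] (0:ℚ_[p])) = 0 := by
      apply Finset.prod_eq_zero (Finset.mem_range.mpr (Nat.succ_pos n))
      simp
    rw [this, mul_zero]
  simp [this]

lemma eps_zpow_mul {k : ℤ} {u : ℚ_[p]} (hu : ‖u‖ = 1) :
    eps ((p : ℚ_[p]) ^ k * u) = u := by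
  have hu0 : u ≠ 0 := by intro h; rw [h, norm_zero] at hu; norm_num at hu
  have hx0 : (p : ℚ_[p]) ^ k * u ≠ 0 := mul_ne_zero (zpow_ne_zero _ hp_cast_ne_zero) hu0
  have hval : ((p : ℚ_[p]) ^ k * u).valuation = k := by
    have hnorm : ‖(p : ℚ_[p]) ^ k * u‖ = (p : ℝ) ^ (-k) := by
      rw [norm_mul, Padic.norm_p_zpow, hu, mul_one]
    rw [Padic.norm_eq_zpow_neg_valuation hx0] at hnorm
    have := (zpow_right_strictMono₀ hp_one_lt).injective hnorm
    omega
  rw [eps, if_neg hx0, hval, ← mul_assoc, ← zpow_add₀ hp_cast_ne_zero,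
    neg_add_cancel, zpow_zero, one_mul]

end Aux

theorem schneiderF_conj (p : ℕ) [Fact p.Prime] :
    (schneiderF (p := p)) ∘ tau = sigma ∘ (schneiderF (p := p)) := by
  funext x
  simp only [Function.comp_apply]
  by_cases hx : x = 0
  · subst hx
    rw [tau_zero, schneiderF_zero, sigma]
    have heps : eps (0 : ℚ_[p]) = 1 := if_pos rfl
    rw [heps, fdigit_one]
    simp
  · set a₀ : ℕ := fdigit (1 / eps x) with ha₀def
    set w : ℚ_[p] := schneiderF (tau x) with hwdef
    have hw : ‖w‖ ≤ (p : ℝ)⁻¹ :=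
      le_trans (norm_schneiderF_le (tau x)) (norm_tau_le x)
    have hplt : (p:ℝ)⁻¹ < 1 := inv_lt_one_of_one_lt₀ hp_one_lt
    have hwlt : ‖w‖ < 1 := lt_of_le_of_lt hw hplt
    have ha₀ : a₀ ≠ 0 := fdigit_ne_zero (norm_one_div_eps x)
    have ha₀lt : a₀ < p := fdigit_lt _
    have hna : ‖(a₀ : ℚ_[p])‖ = 1 := by
      refine le_antisymm (norm_natCast_le_one a₀) ?_
      by_contra hlt
      push_neg at hlt
      have : ‖((a₀ : ℤ) : ℚ_[p])‖ < 1 := by exact_mod_cast hlt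
      rw [Padic.norm_intCast_lt_one_iff] at this
      have : p ∣ a₀ := by exact_mod_cast this
      have := Nat.le_of_dvd (Nat.pos_of_ne_zero ha₀) this
      omega
    set u : ℚ_[p] := (a₀ : ℚ_[p]) + w with hudef
    have hu : ‖u‖ = 1 := by
      rw [hudef, Padic.add_eq_max_of_ne (by rw [hna]; exact fun h => absurd h.symm hwlt.ne),
        hna, max_eq_left hwlt.le]
    have hq : x / eps x = (p : ℚ_[p]) ^ x.valuation := by
      rw [eps, if_neg hx]
      rw [zpow_neg]
      field_simp
    have hF : schneiderF x = (p : ℚ_[p]) ^ x.valuation * u := by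
      rw [schneiderF_rec x, hq, ← ha₀def, ← hwdef, ← hudef]
    rw [sigma, hF, eps_zpow_mul hu, hudef, fdigit_add_of_small a₀ ha₀lt hw]
    ring
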